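/- arXiv:1605.06918 — 3 statements merged into one kernel-verified Lean document; each statement's English description precedes it below -/
import Mathlib

section
/- A graph G satisfies γ_R(G) = 2γ(G) if and only if there exists a Roman dominating function f = (B_0, B_1, B_2) of minimum weight with B_1 = ∅ (i.e., f takes only the values 0 and 2). -/
/-! Twice the indicator of a dominating set `D` is a Roman dominating function of weight `2|D|`,
so `γ_R(G) ≤ 2γ(G)`, with a minimum dominating set giving a `{0,2}`-valued witness when equality
holds. Conversely, a minimum Roman dominating function `f` avoiding the value `1` is twice the
indicator of `B₂ = {v | f v = 2}`, which dominates `G`, so `γ_R(G) = 2|B₂| ≥ 2γ(G)`. -/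

variable {V : Type*}

/-- A Roman dominating function: every vertex with value 0 has a neighbor with value 2. -/
def IsRDF (G : SimpleGraph V) (f : V → Fin 3) : Prop :=
  ∀ v, f v = 0 → ∃ u, G.Adj u v ∧ f u = 2

/-- The weight of a Roman dominating function. -/
def romanWeight [Fintype V] (f : V → Fin 3) : ℕ := ∑ v, (f v : ℕ)

/-- The Roman domination number. -/
noncomputable def gammaR [Fintype V] (G : SimpleGraph V) : ℕ :=
  sInf {k | ∃ f : V → Fin 3, IsRDF G f ∧ romanWeight f = k}

/-- A dominating set. -/
def IsDomSet (G : SimpleGraph V) (D : Set V) : Prop :=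
  ∀ v, v ∈ D ∨ ∃ u ∈ D, G.Adj u v

/-- The domination number. -/
noncomputable def gamma [Fintype V] (G : SimpleGraph V) : ℕ :=
  sInf {k | ∃ D : Set V, IsDomSet G D ∧ D.ncard = k}

/-- The generalized Sierpiński graph `S(G,t)` on words of length `t` over `V`. -/
def sierpinski (G : SimpleGraph V) (t : ℕ) : SimpleGraph (Fin t → V) where
  Adj x y := ∃ i : Fin t, (∀ j, j < i → x j = y j) ∧ G.Adj (x i) (y i) ∧
    (∀ j, i < j → x j = y i ∧ y j = x i)
  symm := by
    constructor
    rintro x y ⟨i, h1, h2, h3⟩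
    exact ⟨i, fun j hj => (h1 j hj).symm, h2.symm, fun j hj => ⟨(h3 j hj).2, (h3 j hj).1⟩⟩
  loopless := by
    constructor
    rintro x ⟨i, -, h2, -⟩
    exact G.ne_of_adj h2 rfl

section

variable {G : SimpleGraph V}

lemma romanWeight_indicator_two [Fintype V] (D : Set V) :
    romanWeight (D.indicator 2) = 2 * D.ncard := by
  classical
  simp [romanWeight, Set.indicator_apply, apply_ite (fun x : Fin 3 => (x : ℕ)), Finset.sum_ite,
    Set.ncard_eq_toFinset_card', mul_comm]

lemma IsDomSet.isRDF_indicator_two {D : Set V} (hD : IsDomSet G D) : IsRDF G (D.indicator 2) := by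
  intro v hv
  rcases hD v with hvD | ⟨u, huD, hadj⟩
  · simp [hvD] at hv
  · exact ⟨u, hadj, by simp [huD]⟩

lemma eq_indicator_two_of_ne_one {f : V → Fin 3} (h1 : ∀ v, f v ≠ 1) :
    f = {v | f v = 2}.indicator 2 := by
  funext v
  have := h1 v
  by_cases h2 : f v = 2 <;> simp [h2]
  omega

lemma IsRDF.isDomSet_of_ne_one {f : V → Fin 3} (hf : IsRDF G f) (h1 : ∀ v, f v ≠ 1) :
    IsDomSet G {v | f v = 2} := by
  intro v
  by_cases h2 : f v = 2
  · exact Or.inl h2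
  · obtain ⟨u, hadj, hu⟩ := hf v (by have := h1 v; omega)
    exact Or.inr ⟨u, hu, hadj⟩

variable [Fintype V]

lemma exists_isDomSet_ncard_eq_gamma (G : SimpleGraph V) :
    ∃ D : Set V, IsDomSet G D ∧ D.ncard = gamma G :=
  Nat.sInf_mem (s := {k | ∃ D : Set V, IsDomSet G D ∧ D.ncard = k})
    ⟨_, Set.univ, fun _ => Or.inl trivial, rfl⟩

lemma gamma_le_ncard {D : Set V} (hD : IsDomSet G D) : gamma G ≤ D.ncard :=
  Nat.sInf_le ⟨D, hD, rfl⟩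

lemma gammaR_le_romanWeight {f : V → Fin 3} (hf : IsRDF G f) : gammaR G ≤ romanWeight f :=
  Nat.sInf_le ⟨f, hf, rfl⟩

lemma gammaR_le_two_mul_gamma (G : SimpleGraph V) : gammaR G ≤ 2 * gamma G := by
  obtain ⟨D, hD, hcard⟩ := exists_isDomSet_ncard_eq_gamma G
  simpa [romanWeight_indicator_two, hcard] using gammaR_le_romanWeight hD.isRDF_indicator_two

end

theorem stmt2 [Fintype V] (G : SimpleGraph V) :
    gammaR G = 2 * gamma G ↔
      ∃ f : V → Fin 3, IsRDF G f ∧ romanWeight f = gammaR G ∧ ∀ v, f v ≠ 1 := by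
  constructor
  · intro h
    obtain ⟨D, hD, hcard⟩ := exists_isDomSet_ncard_eq_gamma G
    refine ⟨D.indicator 2, hD.isRDF_indicator_two, by rw [romanWeight_indicator_two, hcard, h],
      fun v => ?_⟩
    by_cases hv : v ∈ D <;> simp [hv]
  · rintro ⟨f, hf, hw, h1⟩
    refine le_antisymm (gammaR_le_two_mul_gamma G) ?_
    calc 2 * gamma G ≤ 2 * {v | f v = 2}.ncard :=
          Nat.mul_le_mul_left 2 (gamma_le_ncard (hf.isDomSet_of_ne_one h1))
      _ = romanWeight f := by rw [← romanWeight_indicator_two, ← eq_indicator_two_of_ne_one h1]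
      _ = gammaR G := hw
end

section
/- Let G = (V,E) be a graph of order n ≥ 2, t ≥ 2 an integer, and S(G,t) the generalized Sierpiński graph of G. For w ∈ V^{t-1}, let V_w = {wx : x ∈ V}. If u ∈ V_w and v ∈ V^t \ V_w are adjacent in S(G,t), then either u is the extreme vertex of ⟨V_w⟩ (i.e., u has the form w'xx...x for some word w' and vertex x) or u is adjacent in ⟨V_w⟩ to that extreme vertex. -/
variable {V : Type*}

/-
If `u ~ v` in `S(G,t)` changes the letter at position `i`, then `u` is constant (equal to `v i`)
after `i`. So when `i` lies before the last two positions, `u` already ends in a repeated letter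
and is the extreme vertex of its copy of `G`; when `i` is the penultimate position, `u` ends in
`u i, v i`, and replacing the last letter by `u i` moves along the edge `{v i, u i}` of `G`
inside that copy.
-/

namespace sierpinski

variable {G : SimpleGraph V} {t : ℕ}

theorem adj_update_of_isTop {u : Fin t → V} {k : Fin t} (hk : IsTop k) {a : V}
    (ha : G.Adj (u k) a) : (sierpinski G t).Adj u (Function.update u k a) :=
  ⟨k, fun _ hj => (Function.update_of_ne hj.ne _ _).symm, by rwa [Function.update_self],
    fun j hj => absurd (hk j) (not_le.2 hj)⟩

theorem le_of_adj_of_ne {u v : Fin t → V} {i : Fin t} (hpre : ∀ j, j < i → u j = v j)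
    {j : Fin t} (hne : v j ≠ u j) : i ≤ j :=
  not_lt.1 fun h => hne (hpre j h).symm

end sierpinski

theorem stmt6 (G : SimpleGraph V) (t : ℕ) (ht : 2 ≤ t)
    (u v : Fin t → V) (hadj : (sierpinski G t).Adj u v)
    (hv : ∃ j : Fin t, (j : ℕ) < t - 1 ∧ v j ≠ u j) :
    u = Function.update u ⟨t - 1, by omega⟩ (u ⟨t - 2, by omega⟩) ∨
      (sierpinski G t).Adj u (Function.update u ⟨t - 1, by omega⟩ (u ⟨t - 2, by omega⟩)) := by
  obtain ⟨i, hpre, hG, hsuf⟩ := hadj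
  obtain ⟨j, hj, hne⟩ := hv
  have hij := sierpinski.le_of_adj_of_ne hpre hne
  have hlast : u ⟨t - 1, by omega⟩ = v i := (hsuf _ (Fin.lt_def.2 (by simp; omega))).1
  rcases lt_or_eq_of_le (show (i : ℕ) ≤ t - 2 by rw [Fin.le_def] at hij; omega) with hi | hi
  · left
    have hpen : u ⟨t - 2, by omega⟩ = v i := (hsuf _ (Fin.lt_def.2 hi)).1
    rw [eq_comm, Function.update_eq_self_iff, hlast, hpen]
  · right
    have hpen : (⟨t - 2, by omega⟩ : Fin t) = i := Fin.ext hi.symm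
    refine sierpinski.adj_update_of_isTop (fun k => Fin.le_def.2 (by simp; omega)) ?_
    rw [hlast, hpen]
    exact hG.symm
end

section
/- If G is a graph of order n ≥ 4 having exactly one vertex of degree n−1 (exactly one universal vertex), then for any integer t ≥ 2: γ_R(S(G,t)) = n^{t-2}(2n − 1). -/
variable {V : Type*}

/-
Write the words of `S(G, s + 2)` as `w u x` with `w ∈ V^s`. The words with prefix `w` form a
copy of `S(G, 2)`: `w u x` is adjacent to `w u y` for `x ~ y` and to `w x u` for `u ~ x`, and
only the diagonal words `w u u` have neighbours outside their block.

Upper bound: `2` on every `w u v₀` with `u ≠ v₀` (it dominates the copy `w u _` of `G`, as `v₀`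
is universal) and `1` on `w v₀ v₀`; the words `w v₀ x` are dominated by `w x v₀`. This costs
`2n - 1` per block.

Lower bound: in a block, every row `u ≠ v₀` (the words `w u _`) contains `w u z` with `z` not
adjacent to `u`, which can only be dominated within the row. So the row weighs at least `1`, at
least `2` unless it is a single `1`, and at least `3` if `w u u` carries a `2`. A row of weight
one forces a `2` on `w v₀ u`, which pays for the deficit. Hence a block weighs at least
`2(n - 1) + k_w`, with `k_w` the number of `2`s on words `w u u`, `u ≠ v₀`, plus one more
unless `w v₀ v₀` is dominated from another block. Such an external dominator is a word
`w' u u` with `u ≠ v₀` carrying a `2`, and it determines `w`; summing over the blocks gives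
`n^s (2n - 1)`.
-/

open Finset

theorem SimpleGraph.ncard_neighborSet_eq_card_sub_one_iff [Fintype V]
    (G : SimpleGraph V) (v : V) :
    (G.neighborSet v).ncard = Fintype.card V - 1 ↔ G.IsUniversal v := by
  classical
  rw [← G.degree_eq_card_sub_one, ← G.card_neighborSet_eq_degree, Set.ncard_eq_toFinset_card',
    Set.toFinset_card]

theorem gammaR_eq_of_forall_le [Fintype V] {G : SimpleGraph V} {k : ℕ}
    {f₀ : V → Fin 3} (hf₀ : IsRDF G f₀) (hk : romanWeight f₀ = k)
    (hle : ∀ f, IsRDF G f → k ≤ romanWeight f) : gammaR G = k :=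
  le_antisymm (Nat.sInf_le ⟨f₀, hf₀, hk⟩)
    (le_csInf ⟨k, f₀, hf₀, hk⟩ (by rintro _ ⟨f, hf, rfl⟩; exact hle f hf))

namespace Sierpinski

variable {G : SimpleGraph V}

/-- The edge relation of `sierpinski G t`, through the first position `i` where the words differ. -/
def AdjAt (G : SimpleGraph V) {t : ℕ} (i : Fin t) (b a : Fin t → V) : Prop :=
  (∀ j, j < i → b j = a j) ∧ G.Adj (b i) (a i) ∧ ∀ j, i < j → b j = a i ∧ a j = b i

/-- Behind the first difference `i`, `a` is constant `b i`; so a common later letter of `a`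
and `a'` forces `b i = b i'`, and `b i' = a i ≠ b i` rules out `i < i'`. -/
theorem AdjAt.eq_of_apply_eq {t : ℕ} {b a a' : Fin t → V} {i i' k : Fin t}
    (h : AdjAt G i b a) (h' : AdjAt G i' b a') (hik : i < k) (hi'k : i' < k)
    (hk : a k = a' k) : a = a' := by
  obtain ⟨hlt, hadj, hgt⟩ := h
  obtain ⟨hlt', hadj', hgt'⟩ := h'
  have hb : b i = b i' := by rw [← (hgt k hik).2, hk, (hgt' k hi'k).2]
  obtain rfl : i = i' := by
    rcases lt_trichotomy i i' with h | h | h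
    · exact absurd (hb.trans (hgt i' h).1) (G.ne_of_adj hadj)
    · exact h
    · exact absurd (hb.symm.trans (hgt' i h).1) (G.ne_of_adj hadj')
  funext j
  rcases lt_trichotomy j i with hj | rfl | hj
  · rw [← hlt j hj, hlt' j hj]
  · rw [← (hgt k hik).1, (hgt' k hi'k).1]
  · rw [(hgt j hj).2, (hgt' j hj).2]

variable {s : ℕ}

def word (w : Fin s → V) (u x : V) : Fin (s + 2) → V := Fin.snoc (Fin.snoc w u) x

abbrev penult : Fin (s + 2) := (Fin.last s).castSucc

@[simp] theorem word_last (w : Fin s → V) (u x : V) : word w u x (Fin.last _) = x := by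
  simp [word]

@[simp] theorem word_penult (w : Fin s → V) (u x : V) : word w u x penult = u := by
  simp [word]

@[simp] theorem word_castSucc_castSucc (w : Fin s → V) (u x : V) (j : Fin s) :
    word w u x j.castSucc.castSucc = w j := by
  simp [word]

theorem castSucc_castSucc_lt_penult (j : Fin s) : j.castSucc.castSucc < penult :=
  Fin.castSucc_lt_castSucc_iff.2 (Fin.castSucc_lt_last j)

theorem penult_lt_last : (penult : Fin (s + 2)) < Fin.last _ := Fin.castSucc_lt_last _

theorem eq_last_or_eq_penult_or_exists_castSucc (j : Fin (s + 2)) :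
    j = Fin.last _ ∨ j = penult ∨ ∃ j' : Fin s, j = j'.castSucc.castSucc := by
  rcases Fin.eq_castSucc_or_eq_last j with ⟨j, rfl⟩ | rfl
  · rcases Fin.eq_castSucc_or_eq_last j with ⟨j', rfl⟩ | rfl
    · exact Or.inr (Or.inr ⟨j', rfl⟩)
    · exact Or.inr (Or.inl rfl)
  · exact Or.inl rfl

theorem eq_word_iff {b : Fin (s + 2) → V} {w : Fin s → V} {u x : V} :
    b = word w u x ↔ (∀ j, b j.castSucc.castSucc = w j) ∧ b penult = u ∧ b (Fin.last _) = x := by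
  refine ⟨by rintro rfl; simp, fun ⟨hw, hu, hx⟩ => funext fun j => ?_⟩
  rcases eq_last_or_eq_penult_or_exists_castSucc j with rfl | rfl | ⟨j, rfl⟩ <;> simp [*]

theorem word_injective (u x : V) : Function.Injective fun w : Fin s → V => word w u x :=
  fun _ _ h => funext fun j => by simpa using congrFun h j.castSucc.castSucc

theorem eq_word_init (b : Fin (s + 2) → V) :
    b = word (Fin.init (Fin.init b)) (b penult) (b (Fin.last _)) :=
  eq_word_iff.2 ⟨fun _ => rfl, rfl, rfl⟩

theorem sum_word {M : Type*} [AddCommMonoid M] [Fintype V] (F : (Fin (s + 2) → V) → M) :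
    ∑ a, F a = ∑ w : Fin s → V, ∑ u, ∑ x, F (word w u x) := by
  rw [← (Fin.snocEquiv fun _ => V).sum_comp, Fintype.sum_prod_type_right,
    ← (Fin.snocEquiv fun _ => V).sum_comp, Fintype.sum_prod_type_right]
  rfl

/-- The only edges leaving a block of words with a common prefix `w`. -/
def ExtAdj (G : SimpleGraph V) (b a : Fin (s + 2) → V) : Prop :=
  ∃ i : Fin s, AdjAt G i.castSucc.castSucc b a

theorem ExtAdj.adj {b a : Fin (s + 2) → V} (h : ExtAdj G b a) : (sierpinski G (s + 2)).Adj b a :=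
  let ⟨_, hi⟩ := h; ⟨_, hi⟩

theorem ExtAdj.apply_penult {b a : Fin (s + 2) → V} (h : ExtAdj G b a) :
    a penult = a (Fin.last _) ∧ b penult = b (Fin.last _) ∧ b (Fin.last _) ≠ a (Fin.last _) := by
  obtain ⟨i, -, hadj, hgt⟩ := h
  have hpenult := hgt penult (castSucc_castSucc_lt_penult i)
  have hlast := hgt (Fin.last _) ((castSucc_castSucc_lt_penult i).trans penult_lt_last)
  exact ⟨hpenult.2.trans hlast.2.symm, hpenult.1.trans hlast.1.symm, by
    rw [hlast.1, hlast.2]; exact (G.ne_of_adj hadj).symm⟩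

theorem ExtAdj.eq_of_apply_last_eq {b a a' : Fin (s + 2) → V} (h : ExtAdj G b a)
    (h' : ExtAdj G b a') (hlast : a (Fin.last _) = a' (Fin.last _)) : a = a' := by
  obtain ⟨i, hi⟩ := h
  obtain ⟨i', hi'⟩ := h'
  exact hi.eq_of_apply_eq hi' ((castSucc_castSucc_lt_penult i).trans penult_lt_last)
    ((castSucc_castSucc_lt_penult i').trans penult_lt_last) hlast

theorem adj_word_iff {b : Fin (s + 2) → V} {w : Fin s → V} {u x : V} :
    (sierpinski G (s + 2)).Adj b (word w u x) ↔
      (∃ y, G.Adj y x ∧ b = word w u y) ∨ (G.Adj x u ∧ b = word w x u) ∨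
        ExtAdj G b (word w u x) := by
  constructor
  · rintro ⟨i, hlt, hadj, hgt⟩
    rcases eq_last_or_eq_penult_or_exists_castSucc i with rfl | rfl | ⟨i, rfl⟩
    · refine Or.inl ⟨b (Fin.last _), by simpa using hadj, eq_word_iff.2 ⟨fun j => ?_, ?_, rfl⟩⟩
      · simpa using hlt _ ((castSucc_castSucc_lt_penult j).trans penult_lt_last)
      · simpa using hlt penult penult_lt_last
    · have hlast := hgt (Fin.last _) penult_lt_last
      simp only [word_penult, word_last] at hadj hlast
      refine Or.inr (Or.inl ⟨hlast.2 ▸ hadj, eq_word_iff.2 ⟨fun j => ?_, hlast.2.symm, hlast.1⟩⟩)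
      simpa using hlt _ (castSucc_castSucc_lt_penult j)
    · exact Or.inr (Or.inr ⟨i, hlt, hadj, hgt⟩)
  · rintro (⟨y, hy, rfl⟩ | ⟨hxu, rfl⟩ | hext)
    · refine ⟨Fin.last _, fun j hj => ?_, by simpa using hy,
        fun j hj => absurd hj (Fin.le_last j).not_gt⟩
      rcases eq_last_or_eq_penult_or_exists_castSucc j with rfl | rfl | ⟨j, rfl⟩
      · exact absurd hj (lt_irrefl _)
      all_goals simp
    · refine ⟨penult, fun j hj => ?_, by simpa using hxu, fun j hj => ?_⟩
      · rcases eq_last_or_eq_penult_or_exists_castSucc j with rfl | rfl | ⟨j, rfl⟩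
        · exact absurd hj (Fin.le_last _).not_gt
        · exact absurd hj (lt_irrefl _)
        · simp
      · rcases eq_last_or_eq_penult_or_exists_castSucc j with rfl | rfl | ⟨j, rfl⟩
        · simp
        · exact absurd hj (lt_irrefl _)
        · exact absurd hj (castSucc_castSucc_lt_penult j).not_gt
    · exact hext.adj

section Block

variable {A : V → Prop} {g : V → V → Fin 3} {v₀ u : V}

/-- `g` is a Roman dominating function of the block `{w} × V × V` of `S(G, s + 2)`, with `g u x`
the value at `w u x`, except at the diagonal vertices `w u u` with `A u`, which are dominated
from outside the block. -/
def IsBlockRDF (G : SimpleGraph V) (A : V → Prop) (g : V → V → Fin 3) : Prop :=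
  ∀ u x, g u x = 0 → (u = x → ¬ A u) → (∃ y, G.Adj y x ∧ g u y = 2) ∨ (G.Adj x u ∧ g x u = 2)

def rowSum [Fintype V] (g : V → V → Fin 3) (u : V) : ℕ := ∑ x, (g u x : ℕ)

theorem apply_le_rowSum [Fintype V] (g : V → V → Fin 3) (u x : V) : (g u x : ℕ) ≤ rowSum g u :=
  single_le_sum (f := fun x => (g u x : ℕ)) (fun _ _ => Nat.zero_le _) (mem_univ x)

theorem apply_add_apply_le_rowSum [Fintype V] (g : V → V → Fin 3) (u : V) {x y : V}
    (hxy : x ≠ y) : (g u x : ℕ) + g u y ≤ rowSum g u := by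
  classical
  rw [← sum_pair hxy (f := fun x => (g u x : ℕ))]
  exact sum_le_sum_of_subset (subset_univ _)

theorem val_eq_two {a : Fin 3} (h : a = 2) : (a : ℕ) = 2 := by rw [h]; rfl

theorem one_le_val {a : Fin 3} (h : a ≠ 0) : 1 ≤ (a : ℕ) := by
  rw [Nat.one_le_iff_ne_zero]; exact fun h' => h (Fin.ext h')

theorem IsBlockRDF.exists_row_witness (hg : IsBlockRDF G A g) (hv₀ : G.IsUniversal v₀)
    (hu : ¬ G.IsUniversal u) (huv : u ≠ v₀) :
    ∃ z, z ≠ u ∧ z ≠ v₀ ∧ (g u z ≠ 0 ∨ ∃ y, y ≠ u ∧ g u y = 2) := by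
  obtain ⟨z, huz, hnadj⟩ : ∃ z, u ≠ z ∧ ¬ G.Adj u z := by
    simpa [SimpleGraph.IsUniversal] using hu
  have hzv : z ≠ v₀ := by
    rintro rfl
    exact hnadj (hv₀ huv.symm).symm
  refine ⟨z, huz.symm, hzv, ?_⟩
  by_cases h0 : g u z = 0
  · rcases hg u z h0 (fun h => absurd h huz) with ⟨y, hyz, hy⟩ | ⟨hzu, -⟩
    · exact Or.inr ⟨y, by rintro rfl; exact hnadj hyz, hy⟩
    · exact absurd hzu.symm hnadj
  · exact Or.inl h0

theorem IsBlockRDF.one_le_rowSum [Fintype V] (hg : IsBlockRDF G A g) (hv₀ : G.IsUniversal v₀)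
    (hu : ¬ G.IsUniversal u) (huv : u ≠ v₀) : 1 ≤ rowSum g u := by
  obtain ⟨z, -, -, hz | ⟨y, -, hy⟩⟩ := hg.exists_row_witness hv₀ hu huv
  · exact (one_le_val hz).trans (apply_le_rowSum g u z)
  · have := apply_le_rowSum g u y
    rw [val_eq_two hy] at this
    omega

theorem IsBlockRDF.three_le_rowSum [Fintype V] (hg : IsBlockRDF G A g) (hv₀ : G.IsUniversal v₀)
    (hu : ¬ G.IsUniversal u) (huv : u ≠ v₀) (huu : g u u = 2) : 3 ≤ rowSum g u := by
  obtain ⟨z, hzu, -, hz | ⟨y, hyu, hy⟩⟩ := hg.exists_row_witness hv₀ hu huv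
  · have := apply_add_apply_le_rowSum g u hzu
    have := one_le_val hz
    rw [val_eq_two huu] at *
    omega
  · have := apply_add_apply_le_rowSum g u hyu
    rw [val_eq_two huu, val_eq_two hy] at this
    omega

/-- A row of weight one carries its `1` at a non-neighbour of `u`, hence not at `v₀`, and
`u v₀` can then only be dominated across, by `v₀ u`. -/
theorem IsBlockRDF.apply_eq_two_of_rowSum_eq_one [Fintype V] (hg : IsBlockRDF G A g)
    (hv₀ : G.IsUniversal v₀) (hu : ¬ G.IsUniversal u) (huv : u ≠ v₀) (h1 : rowSum g u = 1) :
    g v₀ u = 2 := by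
  have hno2 : ∀ y, g u y ≠ 2 := fun y hy => by
    have := apply_le_rowSum g u y
    rw [val_eq_two hy] at this
    omega
  obtain ⟨z, -, hzv, hz | ⟨y, -, hy⟩⟩ := hg.exists_row_witness hv₀ hu huv
  · have h0 : g u v₀ = 0 := by
      by_contra h0
      have := apply_add_apply_le_rowSum g u hzv
      have := one_le_val hz
      have := one_le_val h0
      omega
    rcases hg u v₀ h0 (fun h => absurd h huv) with ⟨y, -, hy⟩ | ⟨-, h2⟩
    · exact absurd hy (hno2 y)
    · exact h2
  · exact absurd hy (hno2 y)

theorem IsBlockRDF.one_le_rowSum_of_not [Fintype V] (hg : IsBlockRDF G A g) (hA : ¬ A v₀) :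
    1 ≤ rowSum g v₀ := by
  by_cases h0 : g v₀ v₀ = 0
  · rcases hg v₀ v₀ h0 (fun _ => hA) with ⟨y, -, hy⟩ | ⟨hadj, -⟩
    · have := apply_le_rowSum g v₀ y
      rw [val_eq_two hy] at this
      omega
    · exact absurd hadj (G.loopless.irrefl v₀)
  · exact (one_le_val h0).trans (apply_le_rowSum g v₀ v₀)

theorem IsBlockRDF.le_sum_rowSum [Fintype V] [DecidableEq V] [Decidable (A v₀)]
    (hg : IsBlockRDF G A g) (hv₀ : G.IsUniversal v₀) (hnu : ∀ u, u ≠ v₀ → ¬ G.IsUniversal u) :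
    2 * (Fintype.card V - 1) + #{u ∈ univ.erase v₀ | g u u = 2} + (if ¬ A v₀ then 1 else 0) ≤
      ∑ u, rowSum g u := by
  set L := {u ∈ univ.erase v₀ | rowSum g u = 1}
  have hrow : ∀ u ∈ univ.erase v₀,
      2 + (if g u u = 2 then 1 else 0) ≤ rowSum g u + (if rowSum g u = 1 then 1 else 0) := by
    intro u hu
    have huv := ne_of_mem_erase hu
    have := hg.one_le_rowSum hv₀ (hnu u huv) huv
    by_cases huu : g u u = 2
    · have := hg.three_le_rowSum hv₀ (hnu u huv) huv huu
      simp only [if_pos huu]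
      split_ifs <;> omega
    · simp only [if_neg huu]
      split_ifs <;> omega
  have hrest : 2 * (Fintype.card V - 1) + #{u ∈ univ.erase v₀ | g u u = 2} ≤
      ∑ u ∈ univ.erase v₀, rowSum g u + #L := by
    have := sum_le_sum hrow
    rwa [sum_add_distrib, sum_add_distrib, sum_const, card_erase_of_mem (mem_univ _), card_univ,
      smul_eq_mul, mul_comm, ← card_filter, ← card_filter] at this
  have hL : 2 * #L ≤ rowSum g v₀ := calc
    2 * #L = ∑ u ∈ L, 2 := by rw [sum_const, smul_eq_mul, mul_comm]
    _ = ∑ u ∈ L, (g v₀ u : ℕ) := sum_congr rfl fun u hu => by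
      obtain ⟨hu, h1⟩ := mem_filter.1 hu
      have huv := ne_of_mem_erase hu
      exact (val_eq_two (hg.apply_eq_two_of_rowSum_eq_one hv₀ (hnu u huv) huv h1)).symm
    _ ≤ rowSum g v₀ := sum_le_sum_of_subset (subset_univ L)
  have hv : (if ¬ A v₀ then 1 else 0) + #L ≤ rowSum g v₀ := by
    by_cases hA : A v₀
    · rw [if_neg (not_not_intro hA)]
      omega
    · rw [if_pos hA]
      have := hg.one_le_rowSum_of_not hA
      omega
  rw [← add_sum_erase _ _ (mem_univ v₀)]
  omega

end Block

theorem isBlockRDF_of_isRDF {f : (Fin (s + 2) → V) → Fin 3}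
    (hf : IsRDF (sierpinski G (s + 2)) f) (w : Fin s → V) :
    IsBlockRDF G (fun u => ∃ b, f b = 2 ∧ ExtAdj G b (word w u u))
      (fun u x => f (word w u x)) := by
  intro u x h0 hA
  obtain ⟨b, hb, hb2⟩ := hf _ h0
  rcases adj_word_iff.1 hb with ⟨y, hy, rfl⟩ | ⟨hxu, rfl⟩ | hext
  · exact Or.inl ⟨y, hy, hb2⟩
  · exact Or.inr ⟨hxu, hb2⟩
  · obtain rfl : u = x := by simpa using hext.apply_penult.1
    exact absurd ⟨b, hb2, hext⟩ (hA rfl)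

open Classical in
theorem card_extDominated_le_sum_card [Fintype V] (f : (Fin (s + 2) → V) → Fin 3) (v₀ : V) :
    #{w | ∃ b, f b = 2 ∧ ExtAdj G b (word w v₀ v₀)} ≤
      ∑ w, #{u ∈ univ.erase v₀ | f (word w u u) = 2} := by
  set D : Finset (Fin s → V) := {w | ∃ b, f b = 2 ∧ ExtAdj G b (word w v₀ v₀)}
  rw [← card_sigma]
  have : Nonempty V := ⟨v₀⟩
  choose! b hb2 hext using fun w (hw : w ∈ D) => (mem_filter.1 hw).2
  have hdiag : ∀ w ∈ D,
      b w = word (Fin.init (Fin.init (b w))) (b w (Fin.last _)) (b w (Fin.last _)) ∧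
        b w (Fin.last _) ≠ v₀ := by
    intro w hw
    obtain ⟨-, hpenult, hne⟩ := (hext w hw).apply_penult
    exact ⟨eq_word_iff.2 ⟨fun _ => rfl, hpenult, rfl⟩, by simpa using hne⟩
  refine card_le_card_of_injOn (fun w => ⟨Fin.init (Fin.init (b w)), b w (Fin.last _)⟩)
    (fun w hw => ?_) (fun w₁ hw₁ w₂ hw₂ h => ?_)
  · obtain ⟨hbw, hne⟩ := hdiag w hw
    exact mem_sigma.2 ⟨mem_univ _, mem_filter.2 ⟨mem_erase.2 ⟨hne, mem_univ _⟩, hbw ▸ hb2 w hw⟩⟩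
  · obtain ⟨h1, h2⟩ := Sigma.mk.inj_iff.1 h
    have hb : b w₁ = b w₂ := by
      rw [(hdiag w₁ hw₁).1, (hdiag w₂ hw₂).1, h1, eq_of_heq h2]
    exact word_injective _ _ ((hext w₁ hw₁).eq_of_apply_last_eq (hb ▸ hext w₂ hw₂) (by simp))

theorem pow_mul_le_romanWeight [Fintype V] {v₀ : V} (hv₀ : G.IsUniversal v₀)
    (hnu : ∀ u, u ≠ v₀ → ¬ G.IsUniversal u) {f : (Fin (s + 2) → V) → Fin 3}
    (hf : IsRDF (sierpinski G (s + 2)) f) :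
    Fintype.card V ^ s * (2 * Fintype.card V - 1) ≤ romanWeight f := by
  classical
  have hblocks := (sum_le_sum fun w (_ : w ∈ univ) =>
      (isBlockRDF_of_isRDF hf w).le_sum_rowSum hv₀ hnu).trans_eq
    (sum_word fun a => (f a : ℕ)).symm
  rw [sum_add_distrib, sum_add_distrib, sum_const, card_univ, Fintype.card_fun, Fintype.card_fin,
    smul_eq_mul, ← card_filter] at hblocks
  have hext := card_extDominated_le_sum_card (G := G) f v₀
  have hsplit := card_filter_add_card_filter_not (s := (univ : Finset (Fin s → V)))
    fun w => ∃ b, f b = 2 ∧ ExtAdj G b (word w v₀ v₀)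
  rw [card_univ, Fintype.card_fun, Fintype.card_fin] at hsplit
  have hcard : 2 * Fintype.card V - 1 = 2 * (Fintype.card V - 1) + 1 := by
    have := Fintype.card_pos_iff.2 ⟨v₀⟩
    omega
  rw [hcard, mul_add, mul_one, romanWeight]
  omega

def canonicalRDF [DecidableEq V] (v₀ : V) (a : Fin (s + 2) → V) : Fin 3 :=
  if a (Fin.last _) = v₀ then if a penult = v₀ then 1 else 2 else 0

theorem isRDF_canonicalRDF [DecidableEq V] {v₀ : V} (hv₀ : G.IsUniversal v₀) :
    IsRDF (sierpinski G (s + 2)) (canonicalRDF v₀) := by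
  intro a ha
  obtain ⟨w, u, x, rfl⟩ : ∃ w u x, a = word w u x := ⟨_, _, _, eq_word_init a⟩
  have hx : x ≠ v₀ := by
    rintro rfl
    by_cases hu : u = x <;> simp [canonicalRDF, hu] at ha
  by_cases hu : u = v₀
  · subst hu
    exact ⟨word w x u, adj_word_iff.2 (Or.inr (Or.inl ⟨(hv₀ hx.symm).symm, rfl⟩)),
      by simp [canonicalRDF, hx]⟩
  · exact ⟨word w u v₀, adj_word_iff.2 (Or.inl ⟨v₀, hv₀ hx.symm, rfl⟩),
      by simp [canonicalRDF, hu]⟩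

theorem romanWeight_canonicalRDF [Fintype V] [DecidableEq V] (v₀ : V) :
    romanWeight (canonicalRDF (s := s) v₀) =
      Fintype.card V ^ s * (2 * Fintype.card V - 1) := by
  have hblock : ∀ w : Fin s → V,
      ∑ u, ∑ x, (canonicalRDF v₀ (word w u x) : ℕ) = 2 * Fintype.card V - 1 := by
    intro w
    simp only [canonicalRDF, word_last, word_penult, apply_ite Fin.val, Fin.val_zero, sum_ite_eq',
      mem_univ, if_true]
    rw [← add_sum_erase _ _ (mem_univ v₀), if_pos rfl,
      sum_congr rfl fun u hu => if_neg (ne_of_mem_erase hu), sum_const,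
      card_erase_of_mem (mem_univ _), card_univ, smul_eq_mul]
    have := Fintype.card_pos_iff.2 ⟨v₀⟩
    simp only [Fin.val_one, Fin.val_two]
    omega
  rw [romanWeight, sum_word, sum_congr rfl fun w _ => hblock w, sum_const, card_univ,
    Fintype.card_fun, Fintype.card_fin, smul_eq_mul]

end Sierpinski

theorem stmt11_general [Fintype V] (G : SimpleGraph V) (n : ℕ) (hn : Fintype.card V = n)
    (huniv : ∃! v : V, (G.neighborSet v).ncard = n - 1)
    (t : ℕ) (ht : 2 ≤ t) :
    gammaR (sierpinski G t) = n ^ (t - 2) * (2 * n - 1) := by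
  classical
  subst hn
  obtain ⟨s, rfl⟩ : ∃ s, t = s + 2 := ⟨t - 2, by omega⟩
  simp only [G.ncard_neighborSet_eq_card_sub_one_iff] at huniv
  obtain ⟨v₀, hv₀, hunique⟩ := huniv
  rw [Nat.add_sub_cancel]
  exact gammaR_eq_of_forall_le (Sierpinski.isRDF_canonicalRDF hv₀)
    (Sierpinski.romanWeight_canonicalRDF v₀)
    fun f hf => Sierpinski.pow_mul_le_romanWeight hv₀ (fun u hu h => hu (hunique u h)) hf

theorem stmt11 [Fintype V] (G : SimpleGraph V) (n : ℕ) (hn : Fintype.card V = n)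
    (hn4 : 4 ≤ n) (huniv : ∃! v : V, (G.neighborSet v).ncard = n - 1)
    (t : ℕ) (ht : 2 ≤ t) :
    gammaR (sierpinski G t) = n ^ (t - 2) * (2 * n - 1) :=
  stmt11_general G n hn huniv t ht
end
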